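/- Let (Ω(S),T) be a substitution dynamical system satisfying condition (BG), and let V be a finite subset of W(S) all of whose elements contain at least one letter of C. Then there exist θ>0 and constants λ(V),ρ(V)>0 such that λ(V)·θ^n ≤ |S^n(v)| ≤ ρ(V)·θ^n for all n∈ℕ and all v∈V. -/

import Mathlib

/-!
Write `u n = |S^n(e)|`. Because `e` occurs with bounded gaps, `S^n(e)` contains about `u n / L`
disjoint copies of `e`, so `u m * u n ≲ u (m + n)`; by (o) every letter occurs in some `S^p(e)`,
so `|S^n(a)| ≲ u n` for every letter `a` and `u (m + n) ≲ u m * u n`. A positive sequence that is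
super- and submultiplicative up to a constant `K` grows like `θ^n`, with `θ` squeezed between the
`n`-th roots of `u n / K` and `K * u n`. A word containing a letter `c ∈ C` grows like `u n` as
well: from below because `S^m(c)` contains `e` as soon as it is longer than the gap bound.
-/

open List Filter Topology MeasureTheory

namespace SubstLR

variable {A : Type*}

/-- Apply the substitution `S` to a finite word. -/
def subst (S : A → List A) (w : List A) : List A := w.flatMap S

/-- `iter S n w` is `S^n(w)`. -/
def iter (S : A → List A) (n : ℕ) (w : List A) : List A := (subst S)^[n] w

/-- The set `W(S)` of finite words associated to `S`. -/
def WS (S : A → List A) : Set (List A) := {w | ∃ (a : A) (n : ℕ), w <:+: iter S n [a]}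

/-- `w` is a finite factor of the two-sided infinite word `ω`. -/
def IsFactor (w : List A) (ω : ℤ → A) : Prop :=
  ∃ k : ℤ, w = (List.range w.length).map fun i => ω (k + i)

/-- The subshift `Ω(S)` associated to `S`. -/
def OmegaS (S : A → List A) : Set (ℤ → A) := {ω | ∀ w, IsFactor w ω → w ∈ WS S}

/-- The set `W(Ω(S))` of finite factors of elements of `Ω(S)`. -/
def WOmega (S : A → List A) : Set (List A) := {w | ∃ ω ∈ OmegaS S, IsFactor w ω}

/-- Condition (ℓ): `|S^n(e)| → ∞`. -/
def CondL (S : A → List A) (e : A) : Prop :=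
  Tendsto (fun n => (iter S n [e]).length) atTop atTop

/-- Condition (o): every letter occurs in some `S^n(e)`. -/
def CondO (S : A → List A) (e : A) : Prop := ∀ a : A, ∃ n : ℕ, a ∈ iter S n [e]

/-- Condition (c): `W(S) = W(Ω(S))`. -/
def CondC (S : A → List A) : Prop := WS S = WOmega S

/-- `(Ω(S),T)` is a substitution dynamical system. -/
def IsSubstSystem (S : A → List A) : Prop := (∃ e, CondL S e ∧ CondO S e) ∧ CondC S

/-- `v` occurs with bounded gaps in the set of words `W`. -/
def BddGaps (v : List A) (W : Set (List A)) : Prop :=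
  ∃ L : ℕ, 0 < L ∧ ∀ w ∈ W, L ≤ w.length → v <:+: w

/-- Condition (BG) for the letter `e`. -/
def BG (S : A → List A) (e : A) : Prop := CondL S e ∧ CondO S e ∧ BddGaps [e] (WS S)

/-- The shift by `k`; `shift 1` is the map `T`. -/
def shift (k : ℤ) (ω : ℤ → A) : ℤ → A := fun n => ω (n + k)

/-- `(Ω(S),T)` is minimal: every orbit is dense in `Ω(S)`. -/
def Minimal [TopologicalSpace A] (S : A → List A) : Prop :=
  ∀ ω ∈ OmegaS S, OmegaS S ⊆ closure {ω' | ∃ k : ℤ, ω' = shift k ω}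

/-- `(Ω(S),T)` is linearly repetitive. -/
def LinRep (S : A → List A) : Prop :=
  ∃ C : ℝ, 0 < C ∧ ∀ v ∈ WS S, ∀ w ∈ WS S, C * v.length ≤ (w.length : ℝ) → v <:+: w

/-- `(Ω(S),T)` is aperiodic. -/
def Aperiodic (S : A → List A) : Prop :=
  ∀ ω ∈ OmegaS S, ∀ k : ℤ, k ≠ 0 → shift k ω ≠ ω

/-- The set `B` of letters `a` with `limsup |S^n(a)| < ∞`. -/
def Bset (S : A → List A) : Set A := {a | ∃ M : ℕ, ∀ n, (iter S n [a]).length ≤ M}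

/-- The set `C = A ∖ B`. -/
def Cset (S : A → List A) : Set A := (Bset S)ᶜ

open Classical in
/-- `tilde S w` is the word obtained from `w` by deleting all letters of `B`. -/
noncomputable def tilde (S : A → List A) (w : List A) : List A :=
  w.filter fun x => decide (x ∈ Cset S)

/-- The induced substitution `S̃`. -/
noncomputable def tildeS (S : A → List A) : A → List A := fun x => tilde S (S x)

section QuasiMultiplicative

variable {v w : ℕ → ℝ}

theorem pow_le_of_supermul (hv : ∀ n, 0 ≤ v n) (hsup : ∀ m n, v m * v n ≤ v (m + n))
    (m : ℕ) {j : ℕ} (hj : j ≠ 0) : v m ^ j ≤ v (m * j) := by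
  obtain ⟨j, rfl⟩ := Nat.exists_eq_add_one_of_ne_zero hj
  induction j with
  | zero => simp
  | succ j ih =>
    calc v m ^ (j + 1 + 1) = v m ^ (j + 1) * v m := pow_succ _ _
      _ ≤ v (m * (j + 1)) * v m := mul_le_mul_of_nonneg_right (ih j.succ_ne_zero) (hv m)
      _ ≤ v (m * (j + 1 + 1)) := by rw [mul_add_one m (j + 1)]; exact hsup _ _

theorem le_pow_of_submul (hw : ∀ n, 0 ≤ w n) (hsub : ∀ m n, w (m + n) ≤ w m * w n)
    (m : ℕ) {j : ℕ} (hj : j ≠ 0) : w (m * j) ≤ w m ^ j := by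
  obtain ⟨j, rfl⟩ := Nat.exists_eq_add_one_of_ne_zero hj
  induction j with
  | zero => simp
  | succ j ih =>
    calc w (m * (j + 1 + 1)) ≤ w (m * (j + 1)) * w m := by rw [mul_add_one m (j + 1)]; exact hsub _ _
      _ ≤ w m ^ (j + 1) * w m := mul_le_mul_of_nonneg_right (ih j.succ_ne_zero) (hw m)
      _ = w m ^ (j + 1 + 1) := (pow_succ _ _).symm

theorem exists_pow_between_of_supermul_of_submul (hv : ∀ n, 0 < v n) (hvw : ∀ n, v n ≤ w n)
    (hsup : ∀ m n, v m * v n ≤ v (m + n)) (hsub : ∀ m n, w (m + n) ≤ w m * w n) :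
    ∃ θ > 0, ∀ n, v n ≤ θ ^ n ∧ θ ^ n ≤ w n := by
  have hw : ∀ n, 0 < w n := fun n => (hv n).trans_le (hvw n)
  have cross : ∀ {m j : ℕ}, m ≠ 0 → j ≠ 0 → v m ^ (m : ℝ)⁻¹ ≤ w j ^ (j : ℝ)⁻¹ := by
    intro m j hm hj
    refine le_of_pow_le_pow_left₀ (mul_ne_zero hm hj) (Real.rpow_nonneg (hw j).le _) ?_
    rw [pow_mul, Real.rpow_inv_natCast_pow (hv m).le hm, mul_comm, pow_mul,
      Real.rpow_inv_natCast_pow (hw j).le hj]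
    calc v m ^ j ≤ v (m * j) := pow_le_of_supermul (fun n => (hv n).le) hsup m hj
      _ ≤ w (j * m) := mul_comm m j ▸ hvw _
      _ ≤ w j ^ m := le_pow_of_submul (fun n => (hw n).le) hsub j hm
  set θ := ⨆ m : ℕ, v (m + 1) ^ ((m + 1 : ℕ) : ℝ)⁻¹
  have hbdd : BddAbove (Set.range fun m : ℕ => v (m + 1) ^ ((m + 1 : ℕ) : ℝ)⁻¹) :=
    ⟨w 1 ^ ((1 : ℕ) : ℝ)⁻¹, by rintro _ ⟨m, rfl⟩; exact cross m.succ_ne_zero one_ne_zero⟩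
  have root_le : ∀ {n : ℕ}, n ≠ 0 → v n ^ (n : ℝ)⁻¹ ≤ θ := by
    intro n hn
    obtain ⟨m, rfl⟩ := Nat.exists_eq_add_one_of_ne_zero hn
    exact le_ciSup hbdd m
  have le_root : ∀ {n : ℕ}, n ≠ 0 → θ ≤ w n ^ (n : ℝ)⁻¹ :=
    fun hn => ciSup_le fun m => cross m.succ_ne_zero hn
  have hθ : 0 < θ := (Real.rpow_pos_of_pos (hv 1) _).trans_le (root_le one_ne_zero)
  refine ⟨θ, hθ, fun n => ?_⟩
  rcases eq_or_ne n 0 with rfl | hn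
  · have hv0 := hsup 0 0
    have hw0 := hsub 0 0
    simp only [add_zero] at hv0 hw0
    exact ⟨by simpa using (mul_le_iff_le_one_left (hv 0)).mp hv0,
      by simpa using (le_mul_iff_one_le_left (hw 0)).mp hw0⟩
  constructor
  · calc v n = (v n ^ (n : ℝ)⁻¹) ^ n := (Real.rpow_inv_natCast_pow (hv n).le hn).symm
      _ ≤ θ ^ n := pow_le_pow_left₀ (Real.rpow_nonneg (hv n).le _) (root_le hn) n
  · calc θ ^ n ≤ (w n ^ (n : ℝ)⁻¹) ^ n := pow_le_pow_left₀ hθ.le (le_root hn) n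
      _ = w n := Real.rpow_inv_natCast_pow (hw n).le hn

theorem exists_pow_bounds_of_quasi_mul {u : ℕ → ℝ} {K : ℝ} (hu : ∀ n, 0 < u n)
    (hsub : ∀ m n, u (m + n) ≤ K * (u m * u n)) (hsup : ∀ m n, u m * u n ≤ K * u (m + n)) :
    ∃ θ > 0, ∀ n, θ ^ n ≤ K * u n ∧ u n ≤ K * θ ^ n := by
  have hu0 := hu 0
  -- `K > 0` and `K * K ≥ 1` are forced by the two hypotheses at `m = n = 0`.
  have hK : 0 < K := by nlinarith [hsub 0 0, mul_pos hu0 hu0]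
  have hK1 : 1 ≤ K * K := by nlinarith [hsub 0 0, hsup 0 0, mul_pos hu0 hu0]
  obtain ⟨θ, hθ, hbounds⟩ := exists_pow_between_of_supermul_of_submul
    (v := fun n => u n / K) (w := fun n => K * u n)
    (fun n => div_pos (hu n) hK)
    (fun n => by rw [div_le_iff₀ hK]; nlinarith [hu n])
    (fun m n => by
      rw [div_mul_div_comm, div_le_div_iff₀ (mul_pos hK hK) hK]
      nlinarith [hsup m n])
    (fun m n => by nlinarith [hsub m n])
  exact ⟨θ, hθ, fun n => ⟨(hbounds n).2, (div_le_iff₀' hK).mp (hbounds n).1⟩⟩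

end QuasiMultiplicative

section Words

variable {S : A → List A}

theorem iter_add (S : A → List A) (m n : ℕ) (w : List A) :
    iter S (m + n) w = iter S m (iter S n w) :=
  Function.iterate_add_apply _ _ _ _

theorem iter_succ (S : A → List A) (n : ℕ) (w : List A) :
    iter S (n + 1) w = iter S n (subst S w) :=
  Function.iterate_succ_apply _ _ _

theorem iter_nil (S : A → List A) (n : ℕ) : iter S n [] = [] := by
  induction n with
  | zero => rfl
  | succ n ih => rw [iter_succ]; exact ih

theorem iter_append (S : A → List A) (n : ℕ) (x y : List A) :
    iter S n (x ++ y) = iter S n x ++ iter S n y := by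
  induction n generalizing x y with
  | zero => rfl
  | succ n ih => simp only [iter_succ, subst, List.flatMap_append, ih]

theorem iter_eq_flatMap (S : A → List A) (n : ℕ) (w : List A) :
    iter S n w = w.flatMap fun a => iter S n [a] := by
  induction w with
  | nil => exact iter_nil S n
  | cons a w ih => rw [List.flatMap_cons, ← ih, ← iter_append]; rfl

theorem length_iter_eq_sum (S : A → List A) (n : ℕ) (w : List A) :
    (iter S n w).length = (w.map fun a => (iter S n [a]).length).sum := by
  rw [iter_eq_flatMap, List.length_flatMap]

theorem iter_infix_iter (S : A → List A) (n : ℕ) {x y : List A} (h : x <:+: y) :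
    iter S n x <:+: iter S n y := by
  obtain ⟨s, t, rfl⟩ := h
  exact ⟨iter S n s, iter S n t, by rw [iter_append, iter_append]⟩

theorem length_iter_le_mul {m c : ℕ} {w : List A} (h : ∀ a ∈ w, (iter S m [a]).length ≤ c) :
    (iter S m w).length ≤ w.length * c := by
  rw [length_iter_eq_sum]
  simpa using List.sum_le_card_nsmul (w.map fun a => (iter S m [a]).length) c (by simpa using h)

theorem length_iter_singleton_le_of_mem {c : A} {v : List A} (hc : c ∈ v) (n : ℕ) :
    (iter S n [c]).length ≤ (iter S n v).length := by
  rw [length_iter_eq_sum S n v]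
  exact List.le_sum_of_mem (List.mem_map_of_mem hc)

theorem count_mul_length_iter_le [DecidableEq A] (e : A) (w : List A) (m : ℕ) :
    w.count e * (iter S m [e]).length ≤ (iter S m w).length := by
  induction w with
  | nil => simp
  | cons a w ih =>
    rw [← List.singleton_append, iter_append, List.length_append, List.count_append]
    rcases eq_or_ne a e with rfl | hae
    · simp only [List.count_singleton_self, add_mul, one_mul]
      omega
    · simp only [List.count_singleton, beq_iff_eq, hae, if_false, zero_add]
      omega

theorem length_subst_le {M : ℕ} (hM : ∀ a, (S a).length ≤ M) (x : List A) :
    (subst S x).length ≤ M * x.length := by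
  rw [subst, List.length_flatMap, mul_comm]
  simpa using List.sum_le_card_nsmul (x.map fun a => (S a).length) M (by simp [hM])

theorem length_iter_le_pow_mul {M : ℕ} (hM : ∀ a, (S a).length ≤ M) (j : ℕ) (x : List A) :
    (iter S j x).length ≤ M ^ j * x.length := by
  induction j generalizing x with
  | zero => simp [iter]
  | succ j ih =>
    calc (iter S (j + 1) x).length ≤ M ^ j * (subst S x).length := by rw [iter_succ]; exact ih _
      _ ≤ M ^ j * (M * x.length) := Nat.mul_le_mul_left _ (length_subst_le hM x)
      _ = M ^ (j + 1) * x.length := by ring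

theorem mem_WS_of_infix {w x : List A} (hw : w ∈ WS S) (h : x <:+: w) : x ∈ WS S := by
  obtain ⟨a, n, hn⟩ := hw
  exact ⟨a, n, h.trans hn⟩

theorem iter_mem_WS {w : List A} (hw : w ∈ WS S) (m : ℕ) : iter S m w ∈ WS S := by
  obtain ⟨a, n, hn⟩ := hw
  exact ⟨a, m + n, by rw [iter_add]; exact iter_infix_iter S m hn⟩

theorem iter_singleton_mem_WS (S : A → List A) (n : ℕ) (a : A) : iter S n [a] ∈ WS S :=
  ⟨a, n, List.infix_refl _⟩

end Words

section Growth

variable {S : A → List A} {e : A}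

theorem mem_Cset_of_condL (h : CondL S e) : e ∈ Cset S := by
  rintro ⟨M, hM⟩
  obtain ⟨n, hn⟩ := (h.eventually_gt_atTop M).exists
  exact (hM n).not_gt hn

theorem length_iter_pos_of_mem_Cset {c : A} (hc : c ∈ Cset S) (n : ℕ) :
    0 < (iter S n [c]).length := by
  by_contra! h
  have hnil : iter S n [c] = [] := List.length_eq_zero_iff.mp (Nat.le_zero.mp h)
  refine hc ⟨(Finset.range n).sup fun i => (iter S i [c]).length, fun j => ?_⟩
  rcases lt_or_ge j n with hj | hj
  · exact Finset.le_sup (f := fun i => (iter S i [c]).length) (Finset.mem_range.mpr hj)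
  · obtain ⟨d, rfl⟩ := Nat.exists_eq_add_of_le' hj
    rw [iter_add, hnil, iter_nil]
    exact Nat.zero_le _

theorem exists_length_iter_le_mul_of_condO [Finite A] (hO : CondO S e) :
    ∃ C, ∀ a n, (iter S n [a]).length ≤ C * (iter S n [e]).length := by
  obtain ⟨M, hM⟩ := Finite.exists_le fun a => (S a).length
  choose g hg using hO
  obtain ⟨C, hC⟩ := Finite.exists_le fun a => M ^ g a
  refine ⟨C, fun a n => ?_⟩
  have hinf : iter S n [a] <:+: iter S (g a) (iter S n [e]) := by
    rw [← iter_add, add_comm, iter_add]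
    exact iter_infix_iter S n ((List.singleton_infix_iff a _).mpr (hg a))
  calc (iter S n [a]).length ≤ M ^ g a * (iter S n [e]).length :=
        hinf.length_le.trans (length_iter_le_pow_mul hM _ _)
    _ ≤ C * (iter S n [e]).length := Nat.mul_le_mul_right _ (hC a)

theorem length_iter_add_le_mul {C : ℕ}
    (hC : ∀ a n, (iter S n [a]).length ≤ C * (iter S n [e]).length) (m n : ℕ) :
    (iter S (m + n) [e]).length ≤ C * ((iter S m [e]).length * (iter S n [e]).length) := by
  rw [iter_add]
  calc _ ≤ (iter S n [e]).length * (C * (iter S m [e]).length) :=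
        length_iter_le_mul fun a _ => hC a m
    _ = C * ((iter S m [e]).length * (iter S n [e]).length) := by ring

variable {L : ℕ}

theorem le_count_of_bddGaps [DecidableEq A] (hgap : ∀ w ∈ WS S, L ≤ w.length → [e] <:+: w)
    {j : ℕ} {w : List A} (hw : w ∈ WS S) (hj : j * L ≤ w.length) : j ≤ w.count e := by
  induction j generalizing w with
  | zero => exact Nat.zero_le _
  | succ j ih =>
    rw [Nat.succ_mul] at hj
    have hhead : [e] <:+: w.take L :=
      hgap _ (mem_WS_of_infix hw (w.take_prefix L).isInfix)
        (by rw [List.length_take]; omega)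
    have htail : j ≤ (w.drop L).count e :=
      ih (mem_WS_of_infix hw (w.drop_suffix L).isInfix) (by rw [List.length_drop]; omega)
    have hpos : 0 < (w.take L).count e :=
      List.count_pos_iff.mpr (hhead.subset (List.mem_singleton_self e))
    rw [← List.take_append_drop L w, List.count_append]
    omega

theorem exists_pos_infix_iter_of_bddGaps (hgap : ∀ w ∈ WS S, L ≤ w.length → [e] <:+: w)
    (hL : CondL S e) : ∃ k, 0 < k ∧ [e] <:+: iter S k [e] := by
  obtain ⟨k, hkL, hk⟩ := ((hL.eventually_ge_atTop L).and (eventually_gt_atTop 0)).exists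
  exact ⟨k, hk, hgap _ (iter_singleton_mem_WS S k e) hkL⟩

theorem iter_infix_iter_add_mul {k : ℕ} (hk : [e] <:+: iter S k [e]) (i t : ℕ) :
    iter S i [e] <:+: iter S (i + k * t) [e] := by
  induction t with
  | zero => exact List.infix_refl _
  | succ t ih =>
    rw [mul_add_one, ← add_assoc, iter_add]
    exact ih.trans (iter_infix_iter S _ hk)

/-- `u m ≲ u (m + n)`: pad `n` up to a multiple of the return time `k` of `e`. -/
theorem length_iter_le_pow_mul_length_iter_add {M k : ℕ} (hM : ∀ a, (S a).length ≤ M)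
    (hM0 : 0 < M) (hk0 : 0 < k) (hk : [e] <:+: iter S k [e]) (m n : ℕ) :
    (iter S m [e]).length ≤ M ^ k * (iter S (m + n) [e]).length := by
  have hr : n % k < k := Nat.mod_lt n hk0
  have hpad : m + k * (n / k + 1) = (k - n % k) + (m + n) := by
    have := Nat.mod_add_div n k
    rw [mul_add_one]
    omega
  calc (iter S m [e]).length ≤ (iter S (m + k * (n / k + 1)) [e]).length :=
        (iter_infix_iter_add_mul hk m _).length_le
    _ ≤ M ^ (k - n % k) * (iter S (m + n) [e]).length := by
        rw [hpad, iter_add]; exact length_iter_le_pow_mul hM _ _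
    _ ≤ M ^ k * (iter S (m + n) [e]).length :=
        Nat.mul_le_mul_right _ (Nat.pow_le_pow_right hM0 (Nat.sub_le k _))

/-- `S^n(e)` contains `⌊u n / L⌋` copies of `e`, each of which grows into a copy of `S^m(e)`. -/
theorem length_iter_mul_le_length_iter_add (hgap : ∀ w ∈ WS S, L ≤ w.length → [e] <:+: w)
    (hL0 : 0 < L) {M k : ℕ} (hM : ∀ a, (S a).length ≤ M) (hM0 : 0 < M) (hk0 : 0 < k)
    (hk : [e] <:+: iter S k [e]) (m n : ℕ) :
    (iter S m [e]).length * (iter S n [e]).length ≤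
      L * (M ^ k + 1) * (iter S (m + n) [e]).length := by
  classical
  set um := (iter S m [e]).length
  set un := (iter S n [e]).length
  set umn := (iter S (m + n) [e]).length
  have hcopies : un / L * um ≤ umn :=
    calc un / L * um ≤ (iter S n [e]).count e * um := Nat.mul_le_mul_right _
          (le_count_of_bddGaps hgap (iter_singleton_mem_WS S n e) (Nat.div_mul_le_self _ _))
      _ ≤ umn := by
          simp only [umn, iter_add]; exact count_mul_length_iter_le e _ m
  have hshift : um ≤ M ^ k * umn := length_iter_le_pow_mul_length_iter_add hM hM0 hk0 hk m n
  have hun : un ≤ (un / L + 1) * L := by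
    rw [add_one_mul]; exact (Nat.lt_div_mul_add hL0).le
  calc um * un ≤ um * ((un / L + 1) * L) := Nat.mul_le_mul_left _ hun
    _ = L * (un / L * um + um) := by ring
    _ ≤ L * (umn + M ^ k * umn) := by gcongr
    _ = L * (M ^ k + 1) * umn := by ring

theorem exists_pow_bounds_length_iter [Finite A] (hBG : BG S e) :
    ∃ θ > (0 : ℝ), ∃ K > (0 : ℝ), ∀ n,
      θ ^ n ≤ K * (iter S n [e]).length ∧ ((iter S n [e]).length : ℝ) ≤ K * θ ^ n := by
  obtain ⟨hL, hO, L, hL0, hgap⟩ := hBG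
  obtain ⟨C, hC⟩ := exists_length_iter_le_mul_of_condO hO
  obtain ⟨M, hM⟩ := Finite.exists_le fun a => (S a).length
  obtain ⟨k, hk0, hk⟩ := exists_pos_infix_iter_of_bddGaps hgap hL
  set K := C + L * ((M + 1) ^ k + 1)
  have hK : 0 < K := (Nat.mul_pos hL0 (Nat.succ_pos _)).trans_le (Nat.le_add_left _ _)
  obtain ⟨θ, hθ, hbounds⟩ := exists_pow_bounds_of_quasi_mul
    (u := fun n => ((iter S n [e]).length : ℝ)) (K := K)
    (fun n => Nat.cast_pos.mpr (length_iter_pos_of_mem_Cset (mem_Cset_of_condL hL) n))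
    (fun m n => by
      exact_mod_cast (length_iter_add_le_mul hC m n).trans
        (Nat.mul_le_mul_right _ (Nat.le_add_right _ _)))
    (fun m n => by
      exact_mod_cast (length_iter_mul_le_length_iter_add hgap hL0
        (fun a => (hM a).trans M.le_succ) M.succ_pos hk0 hk m n).trans
        (Nat.mul_le_mul_right _ (Nat.le_add_left _ _)))
  exact ⟨θ, hθ, K, Nat.cast_pos.mpr hK, hbounds⟩

theorem exists_length_iter_le_mul_of_finite [Finite A] (hO : CondO S e) {V : Set (List A)}
    (hV : V.Finite) :
    ∃ ρ > 0, ∀ v ∈ V, ∀ n, (iter S n v).length ≤ ρ * (iter S n [e]).length := by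
  obtain ⟨C, hC⟩ := exists_length_iter_le_mul_of_condO hO
  obtain ⟨B, hB⟩ := (hV.image List.length).exists_le
  refine ⟨B * C + 1, Nat.succ_pos _, fun v hv n => ?_⟩
  calc (iter S n v).length ≤ v.length * (C * (iter S n [e]).length) :=
        length_iter_le_mul fun a _ => hC a n
    _ ≤ B * (C * (iter S n [e]).length) := Nat.mul_le_mul_right _ (hB _ ⟨v, hv, rfl⟩)
    _ ≤ (B * C + 1) * (iter S n [e]).length := by rw [← mul_assoc, add_one_mul]; omega

theorem exists_length_iter_le_pow_mul_of_mem_Cset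
    (hgap : ∀ w ∈ WS S, L ≤ w.length → [e] <:+: w) {M : ℕ} (hM : ∀ a, (S a).length ≤ M)
    {c : A} (hc : c ∈ Cset S) (hcW : [c] ∈ WS S) :
    ∃ m, ∀ n, (iter S n [e]).length ≤ M ^ m * (iter S n [c]).length := by
  have hunbdd : ∀ N : ℕ, ∃ m, N < (iter S m [c]).length := by simpa [Cset, Bset] using hc
  obtain ⟨m, hm⟩ := hunbdd L
  have he : [e] <:+: iter S m [c] := hgap _ (iter_mem_WS hcW m) hm.le
  refine ⟨m, fun n => ?_⟩
  calc (iter S n [e]).length ≤ (iter S m (iter S n [c])).length := by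
        rw [← iter_add, add_comm, iter_add]; exact (iter_infix_iter S n he).length_le
    _ ≤ M ^ m * (iter S n [c]).length := length_iter_le_pow_mul hM _ _

theorem exists_length_iter_le_mul_of_mem_Cset_of_finite [Finite A] (hgap : BddGaps [e] (WS S))
    {V : Set (List A)} (hV : V.Finite) (hVW : V ⊆ WS S) (hVC : ∀ v ∈ V, ∃ c ∈ v, c ∈ Cset S) :
    ∃ D > 0, ∀ v ∈ V, ∀ n, (iter S n [e]).length ≤ D * (iter S n v).length := by
  obtain ⟨L, -, hgap⟩ := hgap
  obtain ⟨M, hM⟩ := Finite.exists_le fun a => (S a).length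
  have hword : ∀ v ∈ V, ∃ D, ∀ n, (iter S n [e]).length ≤ D * (iter S n v).length := by
    intro v hv
    obtain ⟨c, hcv, hc⟩ := hVC v hv
    obtain ⟨m, hm⟩ := exists_length_iter_le_pow_mul_of_mem_Cset hgap hM hc
      (mem_WS_of_infix (hVW hv) ((List.singleton_infix_iff c v).mpr hcv))
    exact ⟨M ^ m, fun n =>
      (hm n).trans (Nat.mul_le_mul_left _ (length_iter_singleton_le_of_mem hcv n))⟩
  choose! D hD using hword
  obtain ⟨D₀, hD₀⟩ := (hV.image D).exists_le
  refine ⟨D₀ + 1, D₀.succ_pos, fun v hv n => (hD v hv n).trans ?_⟩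
  exact Nat.mul_le_mul_right _ ((hD₀ _ ⟨v, hv, rfl⟩).trans D₀.le_succ)

end Growth

theorem statement7_general {A : Type*} [Fintype A]
    (S : A → List A) (hBG : ∃ e : A, BG S e)
    (V : Set (List A)) (hVfin : V.Finite) (hVW : V ⊆ WS S)
    (hVC : ∀ v ∈ V, ∃ c ∈ v, c ∈ Cset S) :
    ∃ θ : ℝ, 0 < θ ∧ ∃ lam rho : ℝ, 0 < lam ∧ 0 < rho ∧
      ∀ (n : ℕ), ∀ v ∈ V, lam * θ ^ n ≤ ((iter S n v).length : ℝ) ∧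
        ((iter S n v).length : ℝ) ≤ rho * θ ^ n := by
  obtain ⟨e, he⟩ := hBG
  obtain ⟨θ, hθ, K, hK, hgrowth⟩ := exists_pow_bounds_length_iter he
  obtain ⟨ρ, hρ, hupper⟩ := exists_length_iter_le_mul_of_finite he.2.1 hVfin
  obtain ⟨D, hD, hlower⟩ := exists_length_iter_le_mul_of_mem_Cset_of_finite he.2.2 hVfin hVW hVC
  have hD' : (0 : ℝ) < D := Nat.cast_pos.mpr hD
  refine ⟨θ, hθ, (K * D)⁻¹, ρ * K, by positivity, by positivity, fun n v hv => ⟨?_, ?_⟩⟩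
  · rw [inv_mul_le_iff₀ (by positivity)]
    calc θ ^ n ≤ K * (iter S n [e]).length := (hgrowth n).1
      _ ≤ K * (D * (iter S n v).length) := by gcongr; exact_mod_cast hlower v hv n
      _ = K * D * (iter S n v).length := by ring
  · calc ((iter S n v).length : ℝ) ≤ ρ * (iter S n [e]).length := by exact_mod_cast hupper v hv n
      _ ≤ ρ * (K * θ ^ n) := by gcongr; exact (hgrowth n).2
      _ = ρ * K * θ ^ n := by ring

/-- under (BG), for any finite `V ⊆ W(S)` whose elements all contain a letter
of `C`, there are `θ > 0` and `λ(V), ρ(V) > 0` with `λ(V)θ^n ≤ |S^n(v)| ≤ ρ(V)θ^n`. -/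
theorem statement7 {A : Type*} [Fintype A]
    (S : A → List A) (hS : IsSubstSystem S) (hBG : ∃ e : A, BG S e)
    (V : Set (List A)) (hVfin : V.Finite) (hVW : V ⊆ WS S)
    (hVC : ∀ v ∈ V, ∃ c ∈ v, c ∈ Cset S) :
    ∃ θ : ℝ, 0 < θ ∧ ∃ lam rho : ℝ, 0 < lam ∧ 0 < rho ∧
      ∀ (n : ℕ), ∀ v ∈ V, lam * θ ^ n ≤ ((iter S n v).length : ℝ) ∧
        ((iter S n v).length : ℝ) ≤ rho * θ ^ n :=
  statement7_general S hBG V hVfin hVW hVC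

end SubstLR
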